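/- Let U, V, F be real Banach spaces, K : V → U a continuous linear operator, h ∈ V, and c : U × F → V continuously Fréchet differentiable on an open set W ⊆ U × F. Let e be a continuous map from an open ball B_V(v₀, ε) ⊆ V into F such that (K v, e(v)) ∈ W and v + c(K v, e(v)) − h = 0 for every v ∈ B_V(v₀, ε), and such that at every such point the partial derivative D₂c(K v, e(v)) : F → V is a continuous linear bijection with continuous inverse. Then e is Fréchet differentiable at every v ∈ B_V(v₀, ε) with De(v) = −(D₂c(K v, e(v)))⁻¹ ∘ (id_V + D₁c(K v, e(v)) ∘ K); in particular ‖De(v)‖ ≤ ‖(D₂c(K v, e(v)))⁻¹‖ · (1 + ‖D₁c(K v, e(v))‖ · ‖K‖). -/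

import Mathlib

/-!
The map `Φ (v, f) = v + c (K v, f)` is strictly differentiable at `(v, e v)` with second partial
derivative `D₂c (K v, e v)`, which is invertible. By the implicit function theorem the level set of
`Φ` through `(v, e v)` is, near that point, the graph of a strictly differentiable `ψ` with
`Dψ = -(D₂Φ)⁻¹ ∘ D₁Φ`. Since `e` is continuous, its graph stays in that neighbourhood, so `e`
agrees with `ψ` near `v`.
-/

open Metric Filter Topology

section Implicit

variable {𝕜 : Type*} [NontriviallyNormedField 𝕜]
  {E₁ : Type*} [NormedAddCommGroup E₁] [NormedSpace 𝕜 E₁] [CompleteSpace E₁]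
  {E₂ : Type*} [NormedAddCommGroup E₂] [NormedSpace 𝕜 E₂] [CompleteSpace E₂]
  {G : Type*} [NormedAddCommGroup G] [NormedSpace 𝕜 G] [CompleteSpace G]

theorem HasStrictFDerivAt.hasStrictFDerivAt_of_eventually_apply_eq {Φ : E₁ × E₂ → G}
    {Φ' : E₁ × E₂ →L[𝕜] G} {e : E₁ → E₂} {x : E₁}
    (hΦ : HasStrictFDerivAt Φ Φ' (x, e x)) (hinv : (Φ' ∘L .inr 𝕜 E₁ E₂).IsInvertible)
    (he : ContinuousAt e x) (hsol : ∀ᶠ x' in 𝓝 x, Φ (x', e x') = Φ (x, e x)) :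
    HasStrictFDerivAt e (-((Φ' ∘L .inr 𝕜 E₁ E₂).inverse ∘L (Φ' ∘L .inl 𝕜 E₁ E₂))) x := by
  have hgraph : ContinuousAt (fun x' => (x', e x')) x := continuousAt_id.prodMk he
  have hψ : e =ᶠ[𝓝 x] hΦ.implicitFunctionOfProdDomain hinv := by
    filter_upwards [hgraph.eventually (hΦ.eventually_apply_eq_iff_implicitFunctionOfProdDomain hinv),
      hsol] with x' hiff hx'
    exact (hiff.mp hx').symm
  rw [← ContinuousLinearMap.neg_comp]
  exact (hΦ.hasStrictFDerivAt_implicitFunctionOfProdDomain hinv).congr_of_eventuallyEq hψ.symm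

end Implicit

section LinearPlusNonlinearEquation

variable {U V F : Type*} [NormedAddCommGroup U] [NormedSpace ℝ U]
  [NormedAddCommGroup V] [NormedSpace ℝ V] [CompleteSpace V]
  [NormedAddCommGroup F] [NormedSpace ℝ F] [CompleteSpace F]

theorem hasStrictFDerivAt_of_eventually_add_apply_eq {K : V →L[ℝ] U} {c : U × F → V}
    {A : U × F →L[ℝ] V} {T : V →L[ℝ] F} {e : V → F} {v : V}
    (hc : HasStrictFDerivAt c A (K v, e v))
    (hAT : (A ∘L .inr ℝ U F) ∘L T = .id ℝ V) (hTA : T ∘L (A ∘L .inr ℝ U F) = .id ℝ F)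
    (he : ContinuousAt e v) (hsol : ∀ᶠ x in 𝓝 v, x + c (K x, e x) = v + c (K v, e v)) :
    HasStrictFDerivAt e (-(T ∘L (.id ℝ V + (A ∘L .inl ℝ U F) ∘L K))) v := by
  set L : V × F →L[ℝ] U × F := (K ∘L .fst ℝ V F).prod (.snd ℝ V F)
  have hΦ : HasStrictFDerivAt (fun q : V × F => q.1 + c (L q)) (.fst ℝ V F + A ∘L L) (v, e v) :=
    hasStrictFDerivAt_fst.add (hc.comp (v, e v) L.hasStrictFDerivAt)
  have hΦ₂ : (.fst ℝ V F + A ∘L L) ∘L .inr ℝ V F = A ∘L .inr ℝ U F := by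
    ext; simp [L]
  have hΦ₁ : (.fst ℝ V F + A ∘L L) ∘L .inl ℝ V F = .id ℝ V + (A ∘L .inl ℝ U F) ∘L K := by
    ext; simp [L]
  rw [← hΦ₁, ← ContinuousLinearMap.inverse_eq hAT hTA, ← hΦ₂]
  exact hΦ.hasStrictFDerivAt_of_eventually_apply_eq (hΦ₂ ▸ .of_inverse hAT hTA) he hsol

end LinearPlusNonlinearEquation

theorem ContinuousLinearMap.norm_comp_id_add_comp_le {𝕜 : Type*} [NontriviallyNormedField 𝕜]
    {E F G : Type*} [NormedAddCommGroup E] [NormedSpace 𝕜 E]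
    [NormedAddCommGroup F] [NormedSpace 𝕜 F] [NormedAddCommGroup G] [NormedSpace 𝕜 G]
    (T : E →L[𝕜] G) (D : F →L[𝕜] E) (K : E →L[𝕜] F) :
    ‖T ∘L (ContinuousLinearMap.id 𝕜 E + D ∘L K)‖ ≤ ‖T‖ * (1 + ‖D‖ * ‖K‖) :=
  calc ‖T ∘L (ContinuousLinearMap.id 𝕜 E + D ∘L K)‖
      ≤ ‖T‖ * ‖ContinuousLinearMap.id 𝕜 E + D ∘L K‖ := opNorm_comp_le _ _
    _ ≤ ‖T‖ * (1 + ‖D‖ * ‖K‖) := by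
      gcongr
      exact (norm_add_le _ _).trans (add_le_add norm_id_le (opNorm_comp_le D K))

theorem stmt2_general {U V F : Type*}
    [NormedAddCommGroup U] [NormedSpace ℝ U]
    [NormedAddCommGroup V] [NormedSpace ℝ V] [CompleteSpace V]
    [NormedAddCommGroup F] [NormedSpace ℝ F] [CompleteSpace F]
    (K : V →L[ℝ] U) (h : V) (c : U × F → V)
    (W : Set (U × F)) (hW : IsOpen W) (hc : ContDiffOn ℝ 1 c W)
    (v₀ : V) (ε : ℝ) (e : V → F)
    (he : ContinuousOn e (ball v₀ ε))
    (hmem : ∀ v ∈ ball v₀ ε, ((K v : U), e v) ∈ W)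
    (hsol : ∀ v ∈ ball v₀ ε, v + c ((K v : U), e v) - h = 0)
    (T : V → (V →L[ℝ] F))
    (hT : ∀ v ∈ ball v₀ ε,
      (∀ x : F, T v (fderiv ℝ (fun f' => c ((K v : U), f')) (e v) x) = x) ∧
      (∀ y : V, fderiv ℝ (fun f' => c ((K v : U), f')) (e v) (T v y) = y)) :
    ∀ v ∈ ball v₀ ε,
      HasFDerivAt e
        (-((T v).comp (ContinuousLinearMap.id ℝ V +
            (fderiv ℝ (fun u => c (u, e v)) (K v : U)).comp K))) v ∧
      ‖-((T v).comp (ContinuousLinearMap.id ℝ V +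
            (fderiv ℝ (fun u => c (u, e v)) (K v : U)).comp K))‖ ≤
        ‖T v‖ * (1 + ‖fderiv ℝ (fun u => c (u, e v)) (K v : U)‖ * ‖K‖) := by
  intro v hv
  refine ⟨?_, by rw [norm_neg]; exact (T v).norm_comp_id_add_comp_le _ K⟩
  set A := fderiv ℝ c (K v, e v)
  have hA : HasStrictFDerivAt c A (K v, e v) :=
    (hc.contDiffAt (hW.mem_nhds (hmem v hv))).hasStrictFDerivAt one_ne_zero
  have hD₁ : fderiv ℝ (fun u => c (u, e v)) (K v) = A ∘L .inl ℝ U F :=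
    (hA.hasFDerivAt.comp (K v) (hasFDerivAt_prodMk_left (K v) (e v))).fderiv
  have hD₂ : fderiv ℝ (fun f' => c (K v, f')) (e v) = A ∘L .inr ℝ U F :=
    (hA.hasFDerivAt.comp (e v) (hasFDerivAt_prodMk_right (K v) (e v))).fderiv
  obtain ⟨hTA, hAT⟩ := hT v hv
  rw [hD₂] at hTA hAT
  have hsol' : ∀ᶠ x in 𝓝 v, x + c (K x, e x) = v + c (K v, e v) := by
    filter_upwards [isOpen_ball.mem_nhds hv] with x hx
    rw [sub_eq_zero.mp (hsol x hx), sub_eq_zero.mp (hsol v hv)]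
  rw [hD₁]
  exact (hasStrictFDerivAt_of_eventually_add_apply_eq hA (ContinuousLinearMap.ext hAT)
    (ContinuousLinearMap.ext hTA) (he.continuousAt (isOpen_ball.mem_nhds hv)) hsol').hasFDerivAt

/-- Let `U, V, F` be real Banach spaces, `K : V → U` a continuous linear
operator, `h ∈ V`, and `c : U × F → V` continuously Fréchet differentiable on an open set
`W ⊆ U × F`.  Let `e` be continuous on the ball `B_V(v₀, ε)` with `(K v, e v) ∈ W` and
`v + c (K v, e v) − h = 0` there, and assume at each such point `D₂c (K v, e v)` is a
continuous linear bijection with continuous inverse `T v`.  Then `e` is Fréchet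
differentiable at every `v ∈ B_V(v₀, ε)` with
`De (v) = −(D₂c (K v, e v))⁻¹ ∘ (id_V + D₁c (K v, e v) ∘ K)`; in particular
`‖De (v)‖ ≤ ‖(D₂c (K v, e v))⁻¹‖ (1 + ‖D₁c (K v, e v)‖ ‖K‖)`. -/
theorem stmt2 {U V F : Type*}
    [NormedAddCommGroup U] [NormedSpace ℝ U] [CompleteSpace U]
    [NormedAddCommGroup V] [NormedSpace ℝ V] [CompleteSpace V]
    [NormedAddCommGroup F] [NormedSpace ℝ F] [CompleteSpace F]
    (K : V →L[ℝ] U) (h : V) (c : U × F → V)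
    (W : Set (U × F)) (hW : IsOpen W) (hc : ContDiffOn ℝ 1 c W)
    (v₀ : V) (ε : ℝ) (hε : 0 < ε) (e : V → F)
    (he : ContinuousOn e (ball v₀ ε))
    (hmem : ∀ v ∈ ball v₀ ε, ((K v : U), e v) ∈ W)
    (hsol : ∀ v ∈ ball v₀ ε, v + c ((K v : U), e v) - h = 0)
    (T : V → (V →L[ℝ] F))
    (hT : ∀ v ∈ ball v₀ ε,
      (∀ x : F, T v (fderiv ℝ (fun f' => c ((K v : U), f')) (e v) x) = x) ∧
      (∀ y : V, fderiv ℝ (fun f' => c ((K v : U), f')) (e v) (T v y) = y)) :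
    ∀ v ∈ ball v₀ ε,
      HasFDerivAt e
        (-((T v).comp (ContinuousLinearMap.id ℝ V +
            (fderiv ℝ (fun u => c (u, e v)) (K v : U)).comp K))) v ∧
      ‖-((T v).comp (ContinuousLinearMap.id ℝ V +
            (fderiv ℝ (fun u => c (u, e v)) (K v : U)).comp K))‖ ≤
        ‖T v‖ * (1 + ‖fderiv ℝ (fun u => c (u, e v)) (K v : U)‖ * ‖K‖) :=
  stmt2_general K h c W hW hc v₀ ε e he hmem hsol T hT
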